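/- (Theorem 3.3) Let Â and B̂ be color classes of an undirected graph G = (V,E) such that Ã∖B̃ ≠ ∅ and B̃∖Ã ≠ ∅. Then X = Ã ∩ B̃ is a strong partitive set of G. -/

import Mathlib

/-!
`Ã` and `B̃` are partitive, hence so is `X = Ã ∩ B̃`. Let a partitive `Y` meet `X` and contain
some `v ∉ Ã`, and suppose some `u ∈ X` lies outside `Y`. An edge of `A` then crosses `Y`, which
makes `v` adjacent to all of `Ã`; in the same way, since `B̃ ⊄ Ã`, every vertex of `Ã ∖ B̃` is
adjacent to all of `B̃`. The latter forces the tails of `A` to lie all inside or all outside `B̃`,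
and as no edge of `A` lies inside `B̃` (else `Ã ⊆ B̃`), up to replacing `A` by `A⁻¹` all of `X`
consists of tails of `A`. Finally the edges `(v, t)`, `t` a tail of `A`, form one implication
class; it has the edge `(v, x)` inside `Y`, so all its vertices, `u` among them, lie in `Y`.
-/

open Set

namespace TransOrient

variable {V : Type*}

/-- `E` is the edge set of an undirected graph on the vertex type `V`:
an irreflexive and symmetric relation, given as a set of ordered pairs. -/
def IsGraph (E : Set (V × V)) : Prop :=
  (∀ a : V, (a, a) ∉ E) ∧ (∀ a b : V, (a, b) ∈ E ↔ (b, a) ∈ E)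

/-- The forcing relation `Γ` on directed edges:
`(a,b) Γ (a',b')` iff (`a = a'` and `(b,b') ∉ E`) or (`b = b'` and `(a,a') ∉ E`). -/
def Gamma (E : Set (V × V)) (e e' : V × V) : Prop :=
  e ∈ E ∧ e' ∈ E ∧
    ((e.1 = e'.1 ∧ (e.2, e'.2) ∉ E) ∨ (e.2 = e'.2 ∧ (e.1, e'.1) ∉ E))

/-- The implication classes of `G = (V,E)`: equivalence classes on `E` of
the reflexive-transitive closure of `Γ`. -/
def IsImplicationClass (E : Set (V × V)) (A : Set (V × V)) : Prop :=
  ∃ e ∈ E, A = {e' | Relation.ReflTransGen (Gamma E) e e'}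

/-- `A⁻¹ = {(b,a) : (a,b) ∈ A}`. -/
def inv (A : Set (V × V)) : Set (V × V) := {p | (p.2, p.1) ∈ A}

/-- The color class `Â = A ∪ A⁻¹` of an implication class `A`. -/
def hat (A : Set (V × V)) : Set (V × V) := A ∪ inv A

/-- `Ã`: the set of vertices incident to an edge of `A`. -/
def tilde (A : Set (V × V)) : Set V := {v | ∃ w, (v, w) ∈ A ∨ (w, v) ∈ A}

/-- A transitive orientation `E'` of a symmetric edge set `F`:
`E' ⊆ F`, `E' ∩ E'⁻¹ = ∅`, `E' ∪ E'⁻¹ = F` and `E'` is transitive. -/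
def IsTransOrientation (F E' : Set (V × V)) : Prop :=
  E' ⊆ F ∧ E' ∩ inv E' = ∅ ∧ E' ∪ inv E' = F ∧
    ∀ a b c : V, (a, b) ∈ E' → (b, c) ∈ E' → (a, c) ∈ E'

/-- `G` is a comparability graph if `E` admits a transitive orientation. -/
def IsComparability (E : Set (V × V)) : Prop :=
  ∃ E' : Set (V × V), IsTransOrientation E E'

/-- `E(X)`: the set of edges of `E` with both endpoints in `X`. -/
def edgesOn (E : Set (V × V)) (X : Set V) : Set (V × V) :=
  {p ∈ E | p.1 ∈ X ∧ p.2 ∈ X}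

/-- `X` is a partitive set of `G = (V,E)`. -/
def IsPartitive (E : Set (V × V)) (X : Set V) : Prop :=
  ∀ a ∈ X, ∀ b ∈ X, ∀ c ∉ X, ((a, c) ∈ E ↔ (b, c) ∈ E)

/-- `X` is a "strong" partitive set of `G = (V,E)`. -/
def IsStrongPartitive (E : Set (V × V)) (X : Set V) : Prop :=
  IsPartitive E X ∧
    ∀ Y : Set V, IsPartitive E Y → (Y ∩ X).Nonempty → X ⊆ Y ∨ Y ⊆ X

/-- `X` is a maximal "strong" partitive set of `G = (V,E)`: a strong partitive
set different from `V` which is maximal, for inclusion, among the strong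
partitive sets different from `V`. -/
def IsMaxStrongPartitive (E : Set (V × V)) (X : Set V) : Prop :=
  IsStrongPartitive E X ∧ X ≠ Set.univ ∧
    ∀ Y : Set V, IsStrongPartitive E Y → Y ≠ Set.univ → X ⊆ Y → X = Y

/-- `X` is a partitive set of the induced subgraph `G(W) = (W, E(W))`. -/
def IsPartitiveIn (E : Set (V × V)) (W : Set V) (X : Set V) : Prop :=
  X ⊆ W ∧ ∀ a ∈ X, ∀ b ∈ X, ∀ c ∈ W \ X,
    ((a, c) ∈ edgesOn E W ↔ (b, c) ∈ edgesOn E W)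

/-- `X` is a "strong" partitive set of the induced subgraph `G(W)`. -/
def IsStrongPartitiveIn (E : Set (V × V)) (W : Set V) (X : Set V) : Prop :=
  IsPartitiveIn E W X ∧
    ∀ Y : Set V, IsPartitiveIn E W Y → (Y ∩ X).Nonempty → X ⊆ Y ∨ Y ⊆ X

/-- `X` is a maximal "strong" partitive set of the induced subgraph `G(W)`. -/
def IsMaxStrongPartitiveIn (E : Set (V × V)) (W : Set V) (X : Set V) : Prop :=
  IsStrongPartitiveIn E W X ∧ X ≠ W ∧
    ∀ Y : Set V, IsStrongPartitiveIn E W Y → Y ≠ W → X ⊆ Y → X = Y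

/-- Two directed edges lie in the same color class of `G = (V,E)`. -/
def SameColor (E : Set (V × V)) (e e' : V × V) : Prop :=
  ∃ A : Set (V × V), IsImplicationClass E A ∧ e ∈ hat A ∧ e' ∈ hat A

/-- A simplex of `G = (V,E)` given by its (finite, nonempty) vertex set `VS`:
a complete induced subgraph whose edges, for distinct unordered pairs,
lie in distinct color classes of `G`. -/
def IsSimplex (E : Set (V × V)) (VS : Set V) : Prop :=
  VS.Finite ∧ VS.Nonempty ∧
    (∀ a ∈ VS, ∀ b ∈ VS, a ≠ b → (a, b) ∈ E) ∧
    (∀ a ∈ VS, ∀ b ∈ VS, ∀ c ∈ VS, ∀ d ∈ VS, a ≠ b → c ≠ d →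
      SameColor E (a, b) (c, d) → (a = c ∧ b = d) ∨ (a = d ∧ b = c))

/-- The rank of a simplex on `r+1` vertices is `r`. -/
noncomputable def simplexRank (VS : Set V) : ℕ := VS.ncard - 1

/-- A maximal simplex: its vertex set is not properly contained in the
vertex set of another simplex. -/
def IsMaxSimplex (E : Set (V × V)) (VS : Set V) : Prop :=
  IsSimplex E VS ∧ ∀ VS' : Set V, IsSimplex E VS' → VS ⊆ VS' → VS = VS'

/-- The multiplex `M(S)` generated by a simplex with vertex set `VS`:
the union of all color classes of `G` containing an edge of the simplex. -/
def multiplex (E : Set (V × V)) (VS : Set V) : Set (V × V) :=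
  {e | ∃ A : Set (V × V), IsImplicationClass E A ∧ e ∈ hat A ∧
    ∃ a ∈ VS, ∃ b ∈ VS, a ≠ b ∧ (a, b) ∈ hat A}

/-- A maximal multiplex of `G`: a multiplex generated by a maximal simplex. -/
def IsMaxMultiplex (E : Set (V × V)) (M : Set (V × V)) : Prop :=
  ∃ VS : Set V, IsMaxSimplex E VS ∧ M = multiplex E VS

/-- `P` is a partition of the set `W`. -/
def IsPartitionOf (W : Set V) (P : Set (Set V)) : Prop :=
  (∀ X ∈ P, X.Nonempty) ∧ ⋃₀ P = W ∧
    ∀ X ∈ P, ∀ Y ∈ P, X ≠ Y → X ∩ Y = ∅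

/-- Adjacency in the quotient of the induced subgraph `G(W)` by a partition:
two distinct blocks are adjacent iff some pair of representatives is an
edge of `E(W)`. -/
def quotAdj (E : Set (V × V)) (W : Set V) (X Y : Set V) : Prop :=
  X ≠ Y ∧ ∃ x ∈ X, ∃ y ∈ Y, (x, y) ∈ edgesOn E W

/-- A partitive set of an abstract graph with vertex set `W` and adjacency
relation `Adj`. -/
def IsPartitiveGen {α : Type*} (W : Set α) (Adj : α → α → Prop) (X : Set α) : Prop :=
  X ⊆ W ∧ ∀ a ∈ X, ∀ b ∈ X, ∀ c ∈ W \ X, (Adj a c ↔ Adj b c)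

/-- An abstract graph `(W, Adj)` is indecomposable if all its partitive
sets are trivial. -/
def IndecomposableGen {α : Type*} (W : Set α) (Adj : α → α → Prop) : Prop :=
  ∀ X : Set α, IsPartitiveGen W Adj X → X.Subsingleton ∨ X = W

/-- An isomorphism between the graphs `(Vα, Aα)` and `(Vβ, Aβ)`:
a bijection of the vertex sets preserving adjacency in both directions. -/
def GraphIso {α β : Type*} (Vα : Set α) (Aα : α → α → Prop)
    (Vβ : Set β) (Aβ : β → β → Prop) : Prop :=
  ∃ f : α → β, Set.BijOn f Vα Vβ ∧
    ∀ a ∈ Vα, ∀ b ∈ Vα, (Aα a b ↔ Aβ (f a) (f b))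

/-- `(V', E')` is a subgraph of the induced subgraph `G(W)` of `G = (V,E)`. -/
def IsSubgraphOf (E : Set (V × V)) (W : Set V) (V' : Set V) (E' : Set (V × V)) : Prop :=
  V' ⊆ W ∧ E' ⊆ edgesOn E W ∧ (∀ e ∈ E', e.1 ∈ V' ∧ e.2 ∈ V') ∧
    (∀ a b : V, (a, b) ∈ E' ↔ (b, a) ∈ E')

variable {E A : Set (V × V)}

theorem IsGraph.symm (hG : IsGraph E) {a b : V} (h : (a, b) ∈ E) : (b, a) ∈ E :=
  (hG.2 a b).1 h

theorem IsPartitive.inter {X Y : Set V} (hX : IsPartitive E X) (hY : IsPartitive E Y) :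
    IsPartitive E (X ∩ Y) := by
  intro a ha b hb c hc
  by_cases hcX : c ∈ X
  · exact hY a ha.2 b hb.2 c fun hcY => hc ⟨hcX, hcY⟩
  · exact hX a ha.1 b hb.1 c hcX

theorem gamma_symm (hG : IsGraph E) {e f : V × V} (h : Gamma E e f) : Gamma E f e := by
  obtain ⟨he, hf, ⟨h1, h2⟩ | ⟨h1, h2⟩⟩ := h
  · exact ⟨hf, he, .inl ⟨h1.symm, fun h => h2 (hG.symm h)⟩⟩
  · exact ⟨hf, he, .inr ⟨h1.symm, fun h => h2 (hG.symm h)⟩⟩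

theorem gamma_swap (hG : IsGraph E) {e f : V × V} (h : Gamma E e f) :
    Gamma E e.swap f.swap := by
  obtain ⟨he, hf, h⟩ := h
  exact ⟨hG.symm he, hG.symm hf, h.symm⟩

theorem tilde_inv : tilde (inv A) = tilde A :=
  Set.ext fun _ => exists_congr fun _ => or_comm

namespace IsImplicationClass

theorem subset (hA : IsImplicationClass E A) : A ⊆ E := by
  obtain ⟨e₀, he₀, rfl⟩ := hA
  intro e he
  induction he with
  | refl => exact he₀
  | tail _ h _ => exact h.2.1

theorem mem_of_reflTransGen (hA : IsImplicationClass E A) {e f : V × V} (he : e ∈ A)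
    (h : Relation.ReflTransGen (Gamma E) e f) : f ∈ A := by
  obtain ⟨e₀, -, rfl⟩ := hA
  exact Relation.ReflTransGen.trans he h

theorem mem_of_gamma (hA : IsImplicationClass E A) {e f : V × V} (he : e ∈ A)
    (h : Gamma E e f) : f ∈ A :=
  hA.mem_of_reflTransGen he (.single h)

theorem reflTransGen (hG : IsGraph E) (hA : IsImplicationClass E A) {e f : V × V}
    (he : e ∈ A) (hf : f ∈ A) : Relation.ReflTransGen (Gamma E) e f := by
  obtain ⟨e₀, -, rfl⟩ := hA
  have : Std.Symm (Gamma E) := ⟨fun _ _ => gamma_symm hG⟩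
  exact (Std.Symm.symm _ _ he).trans hf

theorem inv (hG : IsGraph E) (hA : IsImplicationClass E A) : IsImplicationClass E (inv A) := by
  obtain ⟨e₀, he₀, rfl⟩ := hA
  have hswap := Relation.ReflTransGen.lift (r := Gamma E) Prod.swap fun _ _ => gamma_swap hG
  exact ⟨e₀.swap, hG.symm he₀, Set.ext fun _ => ⟨hswap _ _, hswap _ _⟩⟩

theorem of_gamma_invariant (hG : IsGraph E) (hA : IsImplicationClass E A)
    {P : V × V → Prop} (hP : ∀ g ∈ A, ∀ h ∈ A, Gamma E g h → P g → P h)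
    {e f : V × V} (he : e ∈ A) (hf : f ∈ A) (hPe : P e) : P f := by
  induction hA.reflTransGen hG he hf with
  | refl => exact hPe
  | tail hg hgh ih =>
    have hgA := hA.mem_of_reflTransGen he hg
    exact hP _ hgA _ (hA.mem_of_gamma hgA hgh) hgh (ih hgA)

theorem iff_of_mem_tilde (hG : IsGraph E) (hA : IsImplicationClass E A) {Q : V → Prop}
    (hQ : ∀ e ∈ A, Q e.1 ↔ Q e.2) {a b : V} (ha : a ∈ tilde A) (hb : b ∈ tilde A) :
    Q a ↔ Q b := by
  have tail_iff : ∀ e ∈ A, ∀ f ∈ A, Q e.1 ↔ Q f.1 := fun e he f hf =>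
    hA.of_gamma_invariant hG (P := fun g => Q e.1 ↔ Q g.1) (fun g hg h hh hgh ih => by
      rcases hgh.2.2 with ⟨h1, -⟩ | ⟨h2, -⟩
      · rwa [← h1]
      · rw [ih, hQ g hg, h2, hQ h hh]) he hf Iff.rfl
  have iff_tail : ∀ c ∈ tilde A, ∃ e ∈ A, (Q c ↔ Q e.1) := by
    rintro c ⟨w, h | h⟩
    · exact ⟨_, h, Iff.rfl⟩
    · exact ⟨_, h, (hQ _ h).symm⟩
  obtain ⟨e, he, hae⟩ := iff_tail a ha
  obtain ⟨f, hf, hbf⟩ := iff_tail b hb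
  rw [hae, hbf, tail_iff e he f hf]

theorem isPartitive_tilde (hG : IsGraph E) (hA : IsImplicationClass E A) :
    IsPartitive E (tilde A) := by
  intro a ha b hb c hc
  refine hA.iff_of_mem_tilde hG (Q := fun z => (z, c) ∈ E) (fun ⟨x, y⟩ hxy => ?_) ha hb
  have hxyE := hA.subset hxy
  constructor
  · intro hxc
    by_contra hyc
    exact hc ⟨x, .inr (hA.mem_of_gamma hxy ⟨hxyE, hxc, .inl ⟨rfl, hyc⟩⟩)⟩
  · intro hyc
    by_contra hxc
    exact hc ⟨y, .inl (hA.mem_of_gamma hxy ⟨hxyE, hG.symm hyc, .inr ⟨rfl, hxc⟩⟩)⟩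

theorem exists_adj_of_mem_of_notMem (hG : IsGraph E) (hA : IsImplicationClass E A)
    {S : Set V} {a b : V} (ha : a ∈ tilde A ∩ S) (hb : b ∈ tilde A \ S) :
    ∃ z ∈ S, ∃ z' ∈ tilde A \ S, (z, z') ∈ E := by
  by_contra! h
  refine hb.2 ((hA.iff_of_mem_tilde hG (Q := (· ∈ S)) (fun e he => ?_) ha.1 hb.1).1 ha.2)
  have heE := hA.subset he
  constructor
  · intro h1S
    by_contra h2S
    exact h _ h1S _ ⟨⟨e.1, .inr he⟩, h2S⟩ heE
  · intro h2S
    by_contra h1S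
    exact h _ h2S _ ⟨⟨e.2, .inl he⟩, h1S⟩ (hG.symm heE)

theorem adj_of_mem_diff (hG : IsGraph E) (hA : IsImplicationClass E A) {Y : Set V}
    (hY : IsPartitive E Y) {a b v w : V} (ha : a ∈ tilde A ∩ Y) (hb : b ∈ tilde A \ Y)
    (hv : v ∈ Y \ tilde A) (hw : w ∈ tilde A) : (v, w) ∈ E := by
  obtain ⟨z, hz, z', hz', hzz'⟩ := hA.exists_adj_of_mem_of_notMem hG ha hb
  have hvz' : (v, z') ∈ E := (hY z hz v hv.1 z' hz'.2).1 hzz'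
  exact hG.symm ((hA.isPartitive_tilde hG z' hz'.1 w hw v hv.2).1 (hG.symm hvz'))

theorem tilde_subset (hG : IsGraph E) (hA : IsImplicationClass E A) {Y : Set V}
    (hY : IsPartitive E Y) {e : V × V} (he : e ∈ A) (he1 : e.1 ∈ Y) (he2 : e.2 ∈ Y) :
    tilde A ⊆ Y := by
  have ends_mem : ∀ f ∈ A, f.1 ∈ Y ∧ f.2 ∈ Y := fun f hf =>
    hA.of_gamma_invariant hG (P := fun g => g.1 ∈ Y ∧ g.2 ∈ Y)
      (fun g _ h _ ⟨_, hhE, hgh⟩ ⟨hg1, hg2⟩ => by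
        rcases hgh with ⟨h1, hn⟩ | ⟨h2, hn⟩
        · refine ⟨h1 ▸ hg1, by_contra fun hh2 => hn ((hY _ hg1 _ hg2 _ hh2).1 ?_)⟩
          rw [h1]
          exact hhE
        · refine ⟨by_contra fun hh1 => hn ((hY _ hg2 _ hg1 _ hh1).1 ?_), h2 ▸ hg2⟩
          rw [h2]
          exact hG.symm hhE) he hf ⟨he1, he2⟩
  rintro v ⟨w, hvw | hwv⟩
  · exact (ends_mem _ hvw).1
  · exact (ends_mem _ hwv).2

/-- A `Γ`-step of `A` that moves the tail lifts to a `Γ`-step of the edges from `v`. -/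
theorem reflTransGen_fst (hG : IsGraph E) (hA : IsImplicationClass E A) {v : V}
    (hv : ∀ w ∈ tilde A, (v, w) ∈ E) {e f : V × V} (he : e ∈ A) (hf : f ∈ A) :
    Relation.ReflTransGen (Gamma E) (v, e.1) (v, f.1) :=
  hA.of_gamma_invariant hG (P := fun g => Relation.ReflTransGen (Gamma E) (v, e.1) (v, g.1))
    (fun g hg h hh ⟨_, _, hgh⟩ ih => by
      rcases hgh with ⟨h1, -⟩ | ⟨-, hn⟩
      · rwa [← h1]
      · exact ih.tail ⟨hv _ ⟨g.2, .inl hg⟩, hv _ ⟨h.2, .inl hh⟩, .inl ⟨rfl, hn⟩⟩) he hf .refl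

theorem fst_image_subset (hG : IsGraph E) (hA : IsImplicationClass E A) {Y : Set V}
    (hY : IsPartitive E Y) {v x : V} (hvY : v ∈ Y) (hv : ∀ w ∈ tilde A, (v, w) ∈ E)
    (hx : x ∈ Prod.fst '' A) (hxY : x ∈ Y) : Prod.fst '' A ⊆ Y := by
  obtain ⟨e, he, rfl⟩ := hx
  have hC : IsImplicationClass E {g | Relation.ReflTransGen (Gamma E) (v, e.1) g} :=
    ⟨_, hv _ ⟨e.2, .inl he⟩, rfl⟩
  have hCY := hC.tilde_subset hG hY (e := (v, e.1)) .refl hvY hxY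
  rintro _ ⟨f, hf, rfl⟩
  exact hCY ⟨v, .inr (hA.reflTransGen_fst hG hv he hf)⟩

theorem mem_iff_of_mem_fst_image (hG : IsGraph E) (hA : IsImplicationClass E A) {S : Set V}
    (hS : ∀ p ∈ tilde A \ S, ∀ s ∈ S, (p, s) ∈ E) {a b : V} (ha : a ∈ Prod.fst '' A)
    (hb : b ∈ Prod.fst '' A) : a ∈ S ↔ b ∈ S := by
  obtain ⟨e, he, rfl⟩ := ha
  obtain ⟨f, hf, rfl⟩ := hb
  refine hA.of_gamma_invariant hG (P := fun g => e.1 ∈ S ↔ g.1 ∈ S)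
    (fun g hg h hh ⟨_, _, hgh⟩ ih => ?_) he hf .rfl
  rcases hgh with ⟨h1, -⟩ | ⟨-, hn⟩
  · rwa [← h1]
  rw [ih]
  constructor
  · intro hgS
    by_contra hhS
    exact hn (hG.symm (hS _ ⟨⟨h.2, .inl hh⟩, hhS⟩ _ hgS))
  · intro hhS
    by_contra hgS
    exact hn (hS _ ⟨⟨g.2, .inl hg⟩, hgS⟩ _ hhS)

theorem inter_subset_fst_image_or (hG : IsGraph E) (hA : IsImplicationClass E A) {S : Set V}
    (hS : ∀ p ∈ tilde A \ S, ∀ s ∈ S, (p, s) ∈ E) (hno : ∀ e ∈ A, ¬(e.1 ∈ S ∧ e.2 ∈ S)) :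
    tilde A ∩ S ⊆ Prod.fst '' A ∨ tilde A ∩ S ⊆ Prod.fst '' TransOrient.inv A := by
  by_contra! h
  obtain ⟨u, ⟨⟨w, huw | hwu⟩, huS⟩, hu⟩ := not_subset.1 h.1
  · exact hu ⟨_, huw, rfl⟩
  obtain ⟨u', ⟨⟨w', hu'w' | hw'u'⟩, hu'S⟩, hu'⟩ := not_subset.1 h.2
  · have hwS := (hA.mem_iff_of_mem_fst_image hG hS ⟨_, hwu, rfl⟩ ⟨_, hu'w', rfl⟩).2 hu'S
    exact hno _ hwu ⟨hwS, huS⟩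
  · exact hu' ⟨(u', w'), hw'u', rfl⟩

end IsImplicationClass

theorem inter_tilde_subset_of_notMem_tilde {B : Set (V × V)} (hG : IsGraph E)
    (hA : IsImplicationClass E A) (hB : IsImplicationClass E B)
    (h1 : (tilde A \ tilde B).Nonempty) (h2 : (tilde B \ tilde A).Nonempty) {Y : Set V}
    (hY : IsPartitive E Y) {x v : V} (hx : x ∈ tilde A ∩ tilde B ∩ Y) (hv : v ∈ Y \ tilde A) :
    tilde A ∩ tilde B ⊆ Y := by
  intro u hu
  by_contra huY
  have hvA : ∀ w ∈ tilde A, (v, w) ∈ E := fun w hw =>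
    hA.adj_of_mem_diff hG hY ⟨hx.1.1, hx.2⟩ ⟨hu.1, huY⟩ hv hw
  obtain ⟨q, hq⟩ := h2
  have hS : ∀ p ∈ tilde A \ tilde B, ∀ s ∈ tilde B, (p, s) ∈ E := fun p hp s hs =>
    hB.adj_of_mem_diff hG (hA.isPartitive_tilde hG) ⟨hx.1.2, hx.1.1⟩ hq hp hs
  have hno : ∀ e ∈ A, ¬(e.1 ∈ tilde B ∧ e.2 ∈ tilde B) := fun e he ⟨he1, he2⟩ =>
    let ⟨_, hpA, hpB⟩ := h1
    hpB (hA.tilde_subset hG (hB.isPartitive_tilde hG) he he1 he2 hpA)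
  refine huY ?_
  rcases hA.inter_subset_fst_image_or hG hS hno with hX | hX
  · exact hA.fst_image_subset hG hY hv.1 hvA (hX hx.1) hx.2 (hX hu)
  · refine (hA.inv hG).fst_image_subset hG hY hv.1 ?_ (hX hx.1) hx.2 (hX hu)
    rwa [tilde_inv]

end TransOrient

open TransOrient in
/-- **(Theorem 3.3)** If `Ã ∖ B̃ ≠ ∅` and `B̃ ∖ Ã ≠ ∅` for color classes
`Â`, `B̂`, then `Ã ∩ B̃` is a strong partitive set of `G`. -/
theorem tilde_inter_isStrongPartitive
    {V : Type*} (E : Set (V × V)) (hG : IsGraph E)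
    (A B : Set (V × V)) (hA : IsImplicationClass E A) (hB : IsImplicationClass E B)
    (h1 : (tilde A \ tilde B).Nonempty) (h2 : (tilde B \ tilde A).Nonempty) :
    IsStrongPartitive E (tilde A ∩ tilde B) := by
  refine ⟨(hA.isPartitive_tilde hG).inter (hB.isPartitive_tilde hG), fun Y hY ⟨x, hxY, hx⟩ => ?_⟩
  by_cases hYX : Y ⊆ tilde A ∩ tilde B
  · exact .inr hYX
  obtain ⟨v, hvY, hvX⟩ := not_subset.1 hYX
  left
  by_cases hvA : v ∈ tilde A
  · rw [inter_comm]
    exact inter_tilde_subset_of_notMem_tilde hG hB hA h2 h1 hY ⟨⟨hx.2, hx.1⟩, hxY⟩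
      ⟨hvY, fun hvB => hvX ⟨hvA, hvB⟩⟩
  · exact inter_tilde_subset_of_notMem_tilde hG hA hB h1 h2 hY ⟨hx, hxY⟩ ⟨hvY, hvA⟩
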